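/- The generalized-logistic Fourier identity: for A > 0 and c > 0, ∫_ℝ e^{ixz} (cosh(cz))^{−A} dz = (2^{A−1}/c) · |Γ(A/2 + ix/(2c))|² / Γ(A). -/

import Mathlib

/-!
Substituting `u = σ(w) = (1 + e^{-w})⁻¹` in the Beta integral, and using
`σ(w) = e^{w/2} / (2 cosh (w/2))`, `1 - σ(w) = e^{-w/2} / (2 cosh (w/2))`, gives
`B(s, t) = ∫ e^{(s-t) w/2} (2 cosh (w/2))^{-(s+t)} dw`. For `s, t = A/2 ± i x/(2c)` this is,
after the scaling `w = 2cz`, the Fourier integral, and `B(s, t) = Γ(s) Γ(t) / Γ(s + t)`.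
-/

open Real Complex MeasureTheory

namespace Real

lemma sigmoid_eq_exp_div_two_mul_cosh (w : ℝ) : sigmoid w = exp (w / 2) / (2 * cosh (w / 2)) := by
  rw [sigmoid_def, cosh_eq]
  field_simp
  rw [add_mul, one_mul, ← exp_add]
  ring_nf

lemma one_sub_sigmoid_eq_exp_div_two_mul_cosh (w : ℝ) :
    1 - sigmoid w = exp (-w / 2) / (2 * cosh (w / 2)) := by
  rw [← sigmoid_neg, sigmoid_eq_exp_div_two_mul_cosh, neg_div, cosh_neg]

lemma log_sigmoid (w : ℝ) : log (sigmoid w) = w / 2 - log (2 * cosh (w / 2)) := by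
  rw [sigmoid_eq_exp_div_two_mul_cosh, log_div (exp_pos _).ne' (by positivity), log_exp]

lemma log_one_sub_sigmoid (w : ℝ) : log (1 - sigmoid w) = -w / 2 - log (2 * cosh (w / 2)) := by
  rw [one_sub_sigmoid_eq_exp_div_two_mul_cosh, log_div (exp_pos _).ne' (by positivity), log_exp]

lemma setIntegral_Ioo_zero_one_eq_integral_sigmoid {E : Type*} [NormedAddCommGroup E]
    [NormedSpace ℝ E] (g : ℝ → E) :
    ∫ u in Set.Ioo 0 1, g u = ∫ w, (sigmoid w * (1 - sigmoid w)) • g (sigmoid w) := by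
  rw [← range_sigmoid, ← Set.image_univ, integral_image_eq_integral_abs_deriv_smul
    MeasurableSet.univ (fun w _ ↦ (hasDerivAt_sigmoid w).hasDerivWithinAt)
    sigmoid_injective.injOn, setIntegral_univ]
  congr! 3 with w
  exact abs_of_pos (mul_pos (sigmoid_pos w) (sub_pos.2 (sigmoid_lt_one w)))

end Real

namespace Complex

lemma sigmoid_cpow_mul_one_sub_sigmoid_cpow (w : ℝ) (s t : ℂ) :
    (sigmoid w : ℂ) ^ s * (1 - (sigmoid w : ℂ)) ^ t
      = exp ((s - t) * (w / 2)) * ((2 * Real.cosh (w / 2) : ℝ) : ℂ) ^ (-(s + t)) := by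
  have h1 : 0 < 1 - sigmoid w := sub_pos.2 (sigmoid_lt_one w)
  rw [show 1 - (sigmoid w : ℂ) = ((1 - sigmoid w : ℝ) : ℂ) by push_cast; rfl,
    cpow_def_of_ne_zero (by exact_mod_cast (sigmoid_pos w).ne'),
    cpow_def_of_ne_zero (by exact_mod_cast h1.ne'),
    cpow_def_of_ne_zero (by exact_mod_cast (by positivity : (0:ℝ) < 2 * Real.cosh (w / 2)).ne'),
    ← ofReal_log (sigmoid_pos w).le, ← ofReal_log h1.le, ← ofReal_log (by positivity),
    log_sigmoid, log_one_sub_sigmoid, ← Complex.exp_add, ← Complex.exp_add]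
  congr 1
  push_cast
  ring

lemma betaIntegral_eq_integral_sigmoid (s t : ℂ) :
    betaIntegral s t = ∫ w, (sigmoid w : ℂ) ^ s * (1 - (sigmoid w : ℂ)) ^ t := by
  rw [betaIntegral, intervalIntegral.integral_of_le zero_le_one, integral_Ioc_eq_integral_Ioo,
    setIntegral_Ioo_zero_one_eq_integral_sigmoid]
  congr 1 with w
  have h0 : (sigmoid w : ℂ) ≠ 0 := by exact_mod_cast (sigmoid_pos w).ne'
  have h1 : 1 - (sigmoid w : ℂ) ≠ 0 := by exact_mod_cast (sub_pos.2 (sigmoid_lt_one w)).ne'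
  rw [cpow_sub _ _ h0, cpow_sub _ _ h1, cpow_one, cpow_one, real_smul]
  push_cast
  field_simp

lemma integral_exp_mul_cosh_half_cpow (A t : ℝ) (hA : 0 < A) :
    ∫ w : ℝ, exp (I * t * w) * (Real.cosh (w / 2) : ℂ) ^ (-(A : ℂ))
      = 2 ^ (A : ℂ) * (Gamma ((A / 2 : ℝ) + I * t) * Gamma ((A / 2 : ℝ) - I * t))
        / Gamma A := by
  set s : ℂ := (A / 2 : ℝ) + I * t
  set s' : ℂ := (A / 2 : ℝ) - I * t
  have hs : s + s' = A := by simp only [s, s']; push_cast; ring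
  have hre : s.re = A / 2 ∧ s'.re = A / 2 := by simp [s, s']
  have hB : Gamma s * Gamma s' / Gamma A = betaIntegral s s' := by
    rw [div_eq_iff (Gamma_ne_zero_of_re_pos (by simpa using hA)), ← hs,
      mul_comm (betaIntegral _ _),
      Gamma_mul_Gamma_eq_betaIntegral (by linarith [hre.1]) (by linarith [hre.2])]
  have hintegrand (w : ℝ) : (sigmoid w : ℂ) ^ s * (1 - (sigmoid w : ℂ)) ^ s'
      = 2 ^ (-(A : ℂ)) * (exp (I * t * w) * (Real.cosh (w / 2) : ℂ) ^ (-(A : ℂ))) := by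
    rw [sigmoid_cpow_mul_one_sub_sigmoid_cpow, hs, ofReal_mul,
      mul_cpow_ofReal_nonneg zero_le_two (cosh_pos _).le]
    simp only [s, s']
    push_cast
    ring_nf
  rw [mul_div_assoc, hB, betaIntegral_eq_integral_sigmoid,
    integral_congr_ae (.of_forall hintegrand), integral_const_mul, ← mul_assoc,
    ← cpow_add _ _ two_ne_zero, add_neg_cancel, cpow_zero, one_mul]

end Complex

/-- generalized-logistic Fourier identity: for `A > 0`, `c > 0`,
`∫ e^{ixz} cosh(cz)^{−A} dz = (2^{A−1}/c) |Γ(A/2 + ix/(2c))|² / Γ(A)`. -/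
theorem cosh_fourier_gamma (A c x : ℝ) (hA : 0 < A) (hc : 0 < c) :
    (∫ z : ℝ, Complex.exp (Complex.I * x * z) *
        ((Real.cosh (c * z) : ℂ) ^ (-(A : ℂ))))
      = ((2 : ℂ) ^ ((A : ℂ) - 1) / c) *
        (Complex.Gamma ((A / 2 : ℝ) + Complex.I * (x / (2 * c))) *
          Complex.Gamma ((A / 2 : ℝ) - Complex.I * (x / (2 * c)))) /
        (Complex.Gamma (A : ℂ)) := by
  have hscale : (fun z : ℝ ↦ exp (I * x * z) * (Real.cosh (c * z) : ℂ) ^ (-(A : ℂ))) =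
      fun z ↦ exp (I * (x / (2 * c) : ℝ) * (2 * c * z : ℝ)) *
        (Real.cosh ((2 * c * z) / 2) : ℂ) ^ (-(A : ℂ)) := by
    ext z
    rw [show 2 * c * z / 2 = c * z by ring]
    congr 2
    push_cast
    field_simp [hc.ne']
  rw [hscale, Measure.integral_comp_mul_left (fun w : ℝ ↦ exp (I * (x / (2 * c) : ℝ) * w) *
      (Real.cosh (w / 2) : ℂ) ^ (-(A : ℂ))), integral_exp_mul_cosh_half_cpow _ _ hA,
    abs_of_pos (by positivity), cpow_sub _ _ two_ne_zero, cpow_one, real_smul]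
  push_cast
  ring
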